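/- arXiv:1406.5242 — 7 statements merged into one kernel-verified Lean document; each statement's English description precedes it below -/
import Mathlib

section
/- Let A and B be unital complex C*-algebras, let τ_A be a tracial state on A, and let τ_B be a faithful tracial state on B. Suppose T : A → B is a ℂ-linear map such that ‖T x‖ ≤ ‖x‖ for all x ∈ A (T is contractive for the C*-norms) and τ_B((T x)* (T x)) = τ_A(x* x) for all x ∈ A (T is isometric for the 2-norms). Then for every unitary u ∈ A, the element T(u) is a unitary of B. -/
open scoped ComplexOrder

/-! Since `T` is contractive, `v = T u` satisfies `v⋆v ≤ 1`, while the 2-norm isometry gives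
`τ_B(v⋆v) = τ_A(u⋆u) = 1 = τ_B(1)`. So `1 - v⋆v` is a positive element of trace zero, which
vanishes by faithfulness. The trace property gives `τ_B(vv⋆) = 1` as well, and the same argument
applied to `v⋆` shows `vv⋆ = 1`. -/

section Faithful

variable {B : Type*} [CStarAlgebra B] [PartialOrder B] [StarOrderedRing B]

lemma CStarAlgebra.norm_le_one_iff_star_mul_self_le_one (a : B) : ‖a‖ ≤ 1 ↔ star a * a ≤ 1 := by
  rw [← CStarAlgebra.norm_le_one_iff_of_nonneg _ (star_mul_self_nonneg a),
    CStarRing.norm_star_mul_self, ← sq, sq_le_one_iff₀ (norm_nonneg a)]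

variable {τ : B →ₗ[ℂ] ℂ}

lemma eq_zero_of_nonneg_of_map_eq_zero_of_faithful (hτ : ∀ x : B, τ (star x * x) = 0 → x = 0)
    {a : B} (ha : 0 ≤ a) (h : τ a = 0) : a = 0 := by
  obtain ⟨b, rfl⟩ := CStarAlgebra.nonneg_iff_eq_star_mul_self.mp ha
  simp [hτ b h]

lemma eq_of_le_of_map_eq_of_faithful (hτ : ∀ x : B, τ (star x * x) = 0 → x = 0)
    {a b : B} (hab : a ≤ b) (h : τ a = τ b) : a = b := by
  refine (sub_eq_zero.mp (eq_zero_of_nonneg_of_map_eq_zero_of_faithful hτ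
    (sub_nonneg.mpr hab) ?_)).symm
  rw [map_sub, h, sub_self]

lemma star_mul_self_eq_one_of_faithful (hτ : ∀ x : B, τ (star x * x) = 0 → x = 0)
    {w : B} (hw : ‖w‖ ≤ 1) (h : τ (star w * w) = τ 1) : star w * w = 1 :=
  eq_of_le_of_map_eq_of_faithful hτ
    ((CStarAlgebra.norm_le_one_iff_star_mul_self_le_one w).mp hw) h

lemma mem_unitary_of_faithful_of_trace (hτ : ∀ x : B, τ (star x * x) = 0 → x = 0)
    (htr : ∀ x y : B, τ (x * y) = τ (y * x))
    {v : B} (hv : ‖v‖ ≤ 1) (h : τ (star v * v) = τ 1) : v ∈ unitary B := by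
  have hv_star : ‖star v‖ ≤ 1 := by rwa [norm_star]
  have h_star : τ (star (star v) * star v) = τ 1 := by rw [star_star, htr, h]
  refine ⟨star_mul_self_eq_one_of_faithful hτ hv h, ?_⟩
  simpa using star_mul_self_eq_one_of_faithful hτ hv_star h_star

end Faithful

theorem contractive_two_norm_isometry_maps_unitaries_to_unitaries_general
    {A B : Type*} [CStarAlgebra A] [CStarAlgebra B]
    (τA : A →ₗ[ℂ] ℂ)
    (hτA1 : τA 1 = 1)
    (τB : B →ₗ[ℂ] ℂ)
    (hτB1 : τB 1 = 1)
    (hτBtr : ∀ x y : B, τB (x * y) = τB (y * x))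
    (hτBfaithful : ∀ x : B, τB (star x * x) = 0 → x = 0)
    (T : A →ₗ[ℂ] B)
    (hTcontr : ∀ x : A, ‖T x‖ ≤ ‖x‖)
    (hTiso : ∀ x : A, τB (star (T x) * T x) = τA (star x * x))
    (u : A) (hu : star u * u = 1 ∧ u * star u = 1) :
    star (T u) * T u = 1 ∧ T u * star (T u) = 1 := by
  let := CStarAlgebra.spectralOrder A
  have := CStarAlgebra.spectralOrderedRing A
  let := CStarAlgebra.spectralOrder B
  have := CStarAlgebra.spectralOrderedRing B
  have hu_norm : ‖u‖ ≤ 1 := (CStarAlgebra.norm_le_one_iff_star_mul_self_le_one u).mpr hu.1.le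
  refine mem_unitary_of_faithful_of_trace hτBfaithful hτBtr ((hTcontr u).trans hu_norm) ?_
  rw [hTiso, hu.1, hτA1, hτB1]

/-- A linear map between unital complex C*-algebras with tracial states which is
contractive for the C*-norms and isometric for the 2-norms (with the target trace
faithful) sends unitaries to unitaries. -/
theorem contractive_two_norm_isometry_maps_unitaries_to_unitaries
    {A B : Type*} [CStarAlgebra A] [CStarAlgebra B]
    (τA : A →ₗ[ℂ] ℂ)
    (hτA1 : τA 1 = 1)
    (hτApos : ∀ x : A, 0 ≤ τA (star x * x))
    (hτAtr : ∀ x y : A, τA (x * y) = τA (y * x))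
    (τB : B →ₗ[ℂ] ℂ)
    (hτB1 : τB 1 = 1)
    (hτBpos : ∀ x : B, 0 ≤ τB (star x * x))
    (hτBtr : ∀ x y : B, τB (x * y) = τB (y * x))
    (hτBfaithful : ∀ x : B, τB (star x * x) = 0 → x = 0)
    (T : A →ₗ[ℂ] B)
    (hTcontr : ∀ x : A, ‖T x‖ ≤ ‖x‖)
    (hTiso : ∀ x : A, τB (star (T x) * T x) = τA (star x * x))
    (u : A) (hu : star u * u = 1 ∧ u * star u = 1) :
    star (T u) * T u = 1 ∧ T u * star (T u) = 1 :=
  contractive_two_norm_isometry_maps_unitaries_to_unitaries_general τA hτA1 τB hτB1 hτBtr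
    hτBfaithful T hTcontr hTiso u hu
end

section
/- Let A be a unital complex C*-algebra and let x ∈ A with ‖x‖ ≤ 1. Suppose x = u · a where u ∈ A is unitary and a ∈ A is a positive element (self-adjoint with nonnegative spectrum). Then there exist unitaries w₁, w₂ ∈ A such that x = (w₁ + w₂)/2. -/
lemma aux_unitary_diff_prod {A : Type*} [CStarAlgebra A] (c d : A) (h : Commute c d) :
    (c + Complex.I • d) * (c - Complex.I • d) = c * c + d * d := by
  have hI : (Complex.I • d) * (Complex.I • d) = -(d * d) := by
    rw [smul_mul_assoc, mul_smul_comm, smul_smul, Complex.I_mul_I, neg_one_smul]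
  have hc : c * (Complex.I • d) = (Complex.I • d) * c := by
    rw [mul_smul_comm, smul_mul_assoc, h.eq]
  rw [mul_sub, add_mul, add_mul, hI, hc]
  abel

/-- A contraction in a unital complex C*-algebra that admits a polar decomposition
`x = u a` with `u` unitary and `a` positive is an average of two unitaries. -/
theorem contraction_with_unitary_polar_part_avg_of_two_unitaries
    {A : Type*} [CStarAlgebra A] [PartialOrder A] [StarOrderedRing A]
    (x u a : A)
    (hnorm : ‖x‖ ≤ 1)
    (hu : star u * u = 1 ∧ u * star u = 1)
    (ha : 0 ≤ a)
    (hx : x = u * a) :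
    ∃ w₁ w₂ : A, (star w₁ * w₁ = 1 ∧ w₁ * star w₁ = 1) ∧
      (star w₂ * w₂ = 1 ∧ w₂ * star w₂ = 1) ∧
      x = ((1 : ℂ) / 2) • (w₁ + w₂) := by
  rcases subsingleton_or_nontrivial A with hA | hA
  · exact ⟨1, 1, ⟨Subsingleton.elim _ _, Subsingleton.elim _ _⟩,
      ⟨Subsingleton.elim _ _, Subsingleton.elim _ _⟩, Subsingleton.elim _ _⟩
  have hsa : IsSelfAdjoint a := ha.isSelfAdjoint
  -- a = star u * x, so ‖a‖ ≤ ‖x‖ ≤ 1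
  have haeq : a = star u * x := by rw [hx, ← mul_assoc, hu.1, one_mul]
  have hnu : ‖star u‖ ≤ 1 := by
    have h := CStarRing.norm_star_mul_self (x := star u)
    rw [star_star, hu.2, norm_one] at h
    nlinarith [norm_nonneg (star u)]
  have hna : ‖a‖ ≤ 1 := by
    calc ‖a‖ = ‖star u * x‖ := by rw [haeq]
    _ ≤ ‖star u‖ * ‖x‖ := norm_mul_le _ _
    _ ≤ 1 * 1 := mul_le_mul hnu hnorm (norm_nonneg x) zero_le_one
    _ = 1 := one_mul 1
  -- spectrum of a is in [-1, 1]
  have hspec : ∀ t ∈ spectrum ℝ a, 1 - t * t ≥ 0 := by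
    intro t ht
    have h := spectrum.norm_le_norm_of_mem ht
    rw [Real.norm_eq_abs] at h
    nlinarith [abs_nonneg t, le_abs_self t, neg_abs_le t]
  set f : ℝ → ℝ := fun t => Real.sqrt (1 - t * t) with hf
  set b : A := cfc f a with hb
  have hbsa : IsSelfAdjoint b := cfc_predicate f a
  have hcomm : Commute a b := by
    conv_lhs => rw [← cfc_id' ℝ a]
    exact cfc_commute_cfc _ f a
  have hsum : a * a + b * b = 1 := by
    have h1 : a * a = cfc (fun t : ℝ => t * t) a := by
      conv_lhs => rw [← cfc_id' ℝ a]
      rw [← cfc_mul (fun t : ℝ => t) (fun t : ℝ => t) a]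
    have h2 : b * b = cfc (fun t : ℝ => 1 - t * t) a := by
      rw [hb, ← cfc_mul f f a]
      exact cfc_congr fun t ht => Real.mul_self_sqrt (hspec t ht)
    rw [h1, h2, ← cfc_add (a := a) (fun t : ℝ => t * t) (fun t : ℝ => 1 - t * t)]
    calc cfc (fun t : ℝ => t * t + (1 - t * t)) a
        = cfc (fun _ : ℝ => (1 : ℝ)) a := cfc_congr fun t _ => by ring
      _ = 1 := cfc_const_one ℝ a
  set v : A := a + Complex.I • b with hv
  have hstarv : star v = a - Complex.I • b := by
    rw [hv, star_add, hsa.star_eq, star_smul, hbsa.star_eq]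
    simp [sub_eq_add_neg]
  have hvv : v * star v = 1 := by
    rw [hv, hstarv, aux_unitary_diff_prod a b hcomm, hsum]
  have hvv' : star v * v = 1 := by
    have h2 : star v * v = (b + Complex.I • a) * (b - Complex.I • a) := by
      rw [hstarv, hv]
      rw [aux_unitary_diff_prod b a hcomm.symm, sub_mul, mul_add, mul_add,
        smul_mul_assoc, mul_smul_comm, mul_smul_comm, smul_mul_assoc, smul_smul,
        Complex.I_mul_I, neg_one_smul, hcomm.eq]
      abel
    rw [h2, aux_unitary_diff_prod b a hcomm.symm, add_comm, hsum]
  refine ⟨u * v, u * star v, ⟨?_, ?_⟩, ⟨?_, ?_⟩, ?_⟩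
  · rw [star_mul, mul_assoc, ← mul_assoc (star u), hu.1, one_mul, hvv']
  · rw [star_mul, mul_assoc, ← mul_assoc v, hvv, one_mul, hu.2]
  · rw [star_mul, star_star, mul_assoc, ← mul_assoc (star u), hu.1, one_mul, hvv]
  · rw [star_mul, star_star, mul_assoc, ← mul_assoc (star v), hvv', one_mul, hu.2]
  · have hvsum : v + star v = (2 : ℂ) • a := by
      rw [hv, hstarv]
      have h3 : a + Complex.I • b + (a - Complex.I • b) = a + a := by abel
      rw [h3, two_smul]
    rw [hx, ← mul_add, hvsum, mul_smul_comm, smul_smul]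
    norm_num
end

section
/- Let A be a unital complex C*-algebra with a tracial state τ and associated 2-norm ‖x‖₂ := (Re τ(x* x))^{1/2}. Let 0 < ε ≤ 1 and suppose y = u · a where u ∈ A is unitary, a ∈ A satisfies 0 ≤ a ≤ 1, and ‖y‖₂ ≥ 1 - ε. Then ‖y - u‖₂ ≤ 2√ε. -/
/-!
Writing `y = u a`, unitarity of `u` gives `‖y‖₂² = τ(a²)` and `‖y - u‖₂² = τ((1 - a)²)`.
Since `0 ≤ a ≤ 1` forces `a² ≤ a`, we have `(1 - a)² ≤ 1 - a²`, so with `t = ‖y‖₂`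
positivity of `τ` gives `‖y - u‖₂² ≤ 1 - t² ≤ 2 (1 - t) ≤ 2ε`.
-/

open scoped ComplexOrder

section PositiveFunctional

variable {R M : Type*} [NonUnitalRing R] [PartialOrder R] [StarRing R] [StarOrderedRing R]
  [AddCommGroup M] [PartialOrder M] [IsOrderedAddMonoid M]
  {F : Type*} [FunLike F R M] [AddMonoidHomClass F R M]

theorem map_nonneg_of_map_star_mul_self_nonneg (f : F) (hf : ∀ x, 0 ≤ f (star x * x))
    {x : R} (hx : 0 ≤ x) : 0 ≤ f x := by
  rw [StarOrderedRing.nonneg_iff] at hx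
  induction hx using AddSubmonoid.closure_induction with
  | mem _ h => obtain ⟨s, rfl⟩ := h; exact hf s
  | zero => simp
  | add _ _ _ _ h₁ h₂ => rw [map_add]; exact add_nonneg h₁ h₂

theorem monotone_of_map_star_mul_self_nonneg (f : F) (hf : ∀ x, 0 ≤ f (star x * x)) :
    Monotone f := fun x y hxy => by
  simpa [map_sub] using map_nonneg_of_map_star_mul_self_nonneg f hf (sub_nonneg.mpr hxy)

end PositiveFunctional

theorem star_mul_mul_self_of_star_mul_self_eq_one {R : Type*} [Semiring R] [StarMul R]
    {u : R} (hu : star u * u = 1) (x : R) : star (u * x) * (u * x) = star x * x := by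
  rw [star_mul, mul_assoc, ← mul_assoc (star u), hu, one_mul]

section UnitInterval

variable {A : Type*} [Ring A] [PartialOrder A] [StarRing A] [StarOrderedRing A]
  [TopologicalSpace A] [Algebra ℝ A] [ContinuousFunctionalCalculus ℝ A IsSelfAdjoint]
  [NonnegSpectrumClass ℝ A] {a : A}

theorem mul_self_le_self_of_nonneg_of_le_one (ha0 : 0 ≤ a) (ha1 : a ≤ 1) : a * a ≤ a := by
  have h : 0 ≤ a * (1 - a) :=
    Commute.mul_nonneg ha0 (sub_nonneg.mpr ha1) ((Commute.one_right a).sub_right (.refl a))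
  rwa [mul_sub, mul_one, sub_nonneg] at h

theorem one_sub_mul_one_sub_le_one_sub_mul_self (ha0 : 0 ≤ a) (ha1 : a ≤ 1) :
    (1 - a) * (1 - a) ≤ 1 - a * a := by
  have h := sub_nonneg.mpr (mul_self_le_self_of_nonneg_of_le_one ha0 ha1)
  rw [← sub_nonneg,
    show 1 - a * a - (1 - a) * (1 - a) = (a - a * a) + (a - a * a) by noncomm_ring]
  exact add_nonneg h h

theorem re_map_one_sub_mul_one_sub_le {F : Type*} [FunLike F A ℂ] [AddMonoidHomClass F A ℂ]
    (τ : F) (hτ1 : τ 1 = 1)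
    (hτpos : ∀ x : A, 0 ≤ τ (star x * x)) (ha0 : 0 ≤ a) (ha1 : a ≤ 1) :
    (τ ((1 - a) * (1 - a))).re ≤ 2 * (1 - Real.sqrt (τ (a * a)).re) := by
  have hle : (τ ((1 - a) * (1 - a))).re ≤ 1 - (τ (a * a)).re := by
    simpa [map_sub, hτ1] using (Complex.le_def.mp (monotone_of_map_star_mul_self_nonneg τ hτpos
      (one_sub_mul_one_sub_le_one_sub_mul_self ha0 ha1))).1
  have hsq : (τ (a * a)).re = Real.sqrt (τ (a * a)).re ^ 2 := by
    have h := hτpos a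
    rw [(IsSelfAdjoint.of_nonneg ha0).star_eq] at h
    exact (Real.sq_sqrt (Complex.nonneg_iff.mp h).1).symm
  nlinarith [sq_nonneg (1 - Real.sqrt (τ (a * a)).re)]

end UnitInterval

theorem two_norm_sub_unitary_polar_part_le_general
    {A : Type*} [CStarAlgebra A] [PartialOrder A] [StarOrderedRing A]
    (τ : A →ₗ[ℂ] ℂ)
    (hτ1 : τ 1 = 1)
    (hτpos : ∀ x : A, 0 ≤ τ (star x * x))
    (ε : ℝ)
    (y u a : A)
    (hu : star u * u = 1 ∧ u * star u = 1)
    (ha0 : 0 ≤ a) (ha1 : a ≤ 1)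
    (hy : y = u * a)
    (hynorm : 1 - ε ≤ Real.sqrt (τ (star y * y)).re) :
    Real.sqrt (τ (star (y - u) * (y - u))).re ≤ 2 * Real.sqrt ε := by
  have hsa : star a = a := (IsSelfAdjoint.of_nonneg ha0).star_eq
  have hyy : star y * y = a * a := by
    rw [hy, star_mul_mul_self_of_star_mul_self_eq_one hu.1, hsa]
  have hyu : star (y - u) * (y - u) = (1 - a) * (1 - a) := by
    rw [hy, show u * a - u = u * (a - 1) by noncomm_ring,
      star_mul_mul_self_of_star_mul_self_eq_one hu.1, star_sub, star_one, hsa]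
    noncomm_ring
  have hsq : (τ (star (y - u) * (y - u))).re ≤ 2 * ε := by
    rw [hyy] at hynorm
    rw [hyu]
    linarith [re_map_one_sub_mul_one_sub_le τ hτ1 hτpos ha0 ha1]
  calc Real.sqrt (τ (star (y - u) * (y - u))).re ≤ Real.sqrt (2 * ε) := Real.sqrt_le_sqrt hsq
    _ = Real.sqrt 2 * Real.sqrt ε := Real.sqrt_mul zero_le_two ε
    _ ≤ 2 * Real.sqrt ε := by
      gcongr
      exact Real.sqrt_le_iff.mpr ⟨zero_le_two, by norm_num⟩

/-- If `y = u a` with `u` unitary, `0 ≤ a ≤ 1`, and `‖y‖₂ ≥ 1 - ε` for `0 < ε ≤ 1`,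
then `‖y - u‖₂ ≤ 2√ε`, where `‖x‖₂ = √(Re τ(x* x))` for a tracial state `τ`. -/
theorem two_norm_sub_unitary_polar_part_le
    {A : Type*} [CStarAlgebra A] [PartialOrder A] [StarOrderedRing A]
    (τ : A →ₗ[ℂ] ℂ)
    (hτ1 : τ 1 = 1)
    (hτpos : ∀ x : A, 0 ≤ τ (star x * x))
    (hτtr : ∀ x y : A, τ (x * y) = τ (y * x))
    (ε : ℝ) (hε0 : 0 < ε) (hε1 : ε ≤ 1)
    (y u a : A)
    (hu : star u * u = 1 ∧ u * star u = 1)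
    (ha0 : 0 ≤ a) (ha1 : a ≤ 1)
    (hy : y = u * a)
    (hynorm : 1 - ε ≤ Real.sqrt (τ (star y * y)).re) :
    Real.sqrt (τ (star (y - u) * (y - u))).re ≤ 2 * Real.sqrt ε :=
  two_norm_sub_unitary_polar_part_le_general τ hτ1 hτpos ε y u a hu ha0 ha1 hy hynorm
end

section
/- Let A be a unital complex C*-algebra with a tracial state τ and associated 2-norm ‖x‖₂ := (Re τ(x* x))^{1/2}. Let 0 < ε ≤ 1/2. Suppose y ∈ A satisfies ‖y‖ ≤ 1 and ‖y‖₂ ≥ 1 - 2ε, and that y = v · a for some unitary v ∈ A and some a ∈ A with 0 ≤ a ≤ 1. Then for every z ∈ A with ‖z - y‖₂ ≤ ε, there exists a unitary v ∈ A with ‖z - v‖₂ ≤ 4√ε. -/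
open scoped ComplexOrder

/-!
The polar part `v` itself is the unitary. The 2-norm of `τ` is the seminorm of the GNS
pre-Hilbert space of `τ`, so it satisfies the triangle inequality, and
`‖y - v‖₂² = τ((1 - a)²) ≤ τ(1 - a²) = 1 - ‖y‖₂² ≤ 1 - (1 - 2ε)² ≤ 4ε`,
where `(1 - a)² ≤ 1 - a²` because `a - a² = a (1 - a)` is a product of commuting positive elements.
Hence `‖z - v‖₂ ≤ ε + 2√ε ≤ 3√ε`.
-/

theorem map_nonneg_of_forall_map_star_mul_self_nonneg {R M F : Type*} [NonUnitalSemiring R]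
    [PartialOrder R] [StarRing R] [StarOrderedRing R] [AddCommMonoid M] [PartialOrder M]
    [IsOrderedAddMonoid M] [FunLike F R M] [AddMonoidHomClass F R M] (f : F)
    (hf : ∀ x, 0 ≤ f (star x * x)) {p : R} (hp : 0 ≤ p) : 0 ≤ f p := by
  rw [StarOrderedRing.nonneg_iff] at hp
  induction hp using AddSubmonoid.closure_induction with
  | mem x hx => obtain ⟨s, rfl⟩ := hx; exact hf s
  | zero => simp
  | add x y _ _ hx hy => rw [map_add]; exact add_nonneg hx hy

section

variable {A : Type*} [CStarAlgebra A] [PartialOrder A] [StarOrderedRing A]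

theorem one_sub_mul_self_le_one_sub_mul_self {a : A} (ha0 : 0 ≤ a) (ha1 : a ≤ 1) :
    (1 - a) * (1 - a) ≤ 1 - a * a := by
  have h : 0 ≤ a * (1 - a) :=
    Commute.mul_nonneg ha0 (sub_nonneg.mpr ha1) ((Commute.one_right a).sub_right (.refl a))
  rw [← sub_nonneg]
  convert add_nonneg h h using 1
  noncomm_ring

namespace PositiveLinearMap

variable (f : A →ₚ[ℂ] ℂ)

theorem norm_toPreGNS_mul_sub_sq_le (hf : f 1 = 1) {v a : A} (hv : star v * v = 1)
    (ha0 : 0 ≤ a) (ha1 : a ≤ 1) :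
    ‖f.toPreGNS (v * a) - f.toPreGNS v‖ ^ 2 ≤ 1 - ‖f.toPreGNS (v * a)‖ ^ 2 := by
  have hsa : star a = a := ha0.isSelfAdjoint.star_eq
  have hyv : star (v * a - v) * (v * a - v) = (1 - a) * (1 - a) := by
    rw [← mul_sub_one, star_mul, mul_assoc, ← mul_assoc (star v), hv, one_mul, star_sub, hsa,
      star_one]
    noncomm_ring
  have hyy : star (v * a) * (v * a) = a * a := by
    rw [star_mul, mul_assoc, ← mul_assoc (star v), hv, one_mul, hsa]
  rw [← Complex.real_le_real, ← map_sub]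
  push_cast
  rw [preGNS_norm_sq, preGNS_norm_sq]
  simp only [ofPreGNS_toPreGNS, hyv, hyy]
  rw [← hf, ← map_sub]
  exact OrderHomClass.mono f (one_sub_mul_self_le_one_sub_mul_self ha0 ha1)

theorem norm_toPreGNS_mul_sub_le (hf : f 1 = 1) {v a : A} (hv : star v * v = 1)
    (ha0 : 0 ≤ a) (ha1 : a ≤ 1) {ε : ℝ} (hε : ε ≤ 1 / 2)
    (hva : 1 - 2 * ε ≤ ‖f.toPreGNS (v * a)‖) :
    ‖f.toPreGNS (v * a) - f.toPreGNS v‖ ≤ 2 * √ε := by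
  have hsq : (1 - 2 * ε) ^ 2 ≤ ‖f.toPreGNS (v * a)‖ ^ 2 :=
    pow_le_pow_left₀ (by linarith) hva 2
  have h4ε : ‖f.toPreGNS (v * a) - f.toPreGNS v‖ ^ 2 ≤ 4 * ε := by
    nlinarith [f.norm_toPreGNS_mul_sub_sq_le hf hv ha0 ha1]
  calc ‖f.toPreGNS (v * a) - f.toPreGNS v‖ ≤ √(4 * ε) := Real.le_sqrt_of_sq_le h4ε
    _ = 2 * √ε := by
      rw [Real.sqrt_mul (by norm_num), show (4 : ℝ) = 2 ^ 2 by norm_num,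
        Real.sqrt_sq (by norm_num)]

end PositiveLinearMap

end

theorem close_to_unitary_of_close_to_almost_unitary_general
    {A : Type*} [CStarAlgebra A] [PartialOrder A] [StarOrderedRing A]
    (τ : A →ₗ[ℂ] ℂ)
    (hτ1 : τ 1 = 1)
    (hτpos : ∀ x : A, 0 ≤ τ (star x * x))
    (ε : ℝ) (hε1 : ε ≤ 1 / 2)
    (y v a : A)
    (hy2norm : 1 - 2 * ε ≤ Real.sqrt (τ (star y * y)).re)
    (hv : star v * v = 1 ∧ v * star v = 1)
    (ha0 : 0 ≤ a) (ha1 : a ≤ 1)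
    (hy : y = v * a) :
    ∀ z : A, Real.sqrt (τ (star (z - y) * (z - y))).re ≤ ε →
      ∃ w : A, (star w * w = 1 ∧ w * star w = 1) ∧
        Real.sqrt (τ (star (z - w) * (z - w))).re ≤ 4 * Real.sqrt ε := by
  intro z hz
  subst hy
  let f : A →ₚ[ℂ] ℂ := .mk₀ τ fun _ ↦ map_nonneg_of_forall_map_star_mul_self_nonneg τ hτpos
  have hyv := f.norm_toPreGNS_mul_sub_le hτ1 hv.1 ha0 ha1 hε1 hy2norm
  change ‖f.toPreGNS z - f.toPreGNS (v * a)‖ ≤ ε at hz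
  refine ⟨v, hv, ?_⟩
  change ‖f.toPreGNS z - f.toPreGNS v‖ ≤ 4 * √ε
  calc ‖f.toPreGNS z - f.toPreGNS v‖
      ≤ ‖f.toPreGNS z - f.toPreGNS (v * a)‖ + ‖f.toPreGNS (v * a) - f.toPreGNS v‖ :=
        norm_sub_le_norm_sub_add_norm_sub _ _ _
    _ ≤ √ε + 2 * √ε := add_le_add (hz.trans (Real.le_sqrt_self_iff.mpr (by linarith))) hyv
    _ ≤ 4 * √ε := by linarith [Real.sqrt_nonneg ε]

/-- Quantitative version of the paper's Lemma: if `y` is a contraction with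
`‖y‖₂ ≥ 1 - 2ε` admitting a polar decomposition with unitary polar part, then any
`z` with `‖z - y‖₂ ≤ ε` is within `4√ε` (in 2-norm) of a unitary. -/
theorem close_to_unitary_of_close_to_almost_unitary
    {A : Type*} [CStarAlgebra A] [PartialOrder A] [StarOrderedRing A]
    (τ : A →ₗ[ℂ] ℂ)
    (hτ1 : τ 1 = 1)
    (hτpos : ∀ x : A, 0 ≤ τ (star x * x))
    (hτtr : ∀ x y : A, τ (x * y) = τ (y * x))
    (ε : ℝ) (hε0 : 0 < ε) (hε1 : ε ≤ 1 / 2)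
    (y v a : A)
    (hynorm : ‖y‖ ≤ 1)
    (hy2norm : 1 - 2 * ε ≤ Real.sqrt (τ (star y * y)).re)
    (hv : star v * v = 1 ∧ v * star v = 1)
    (ha0 : 0 ≤ a) (ha1 : a ≤ 1)
    (hy : y = v * a) :
    ∀ z : A, Real.sqrt (τ (star (z - y) * (z - y))).re ≤ ε →
      ∃ w : A, (star w * w = 1 ∧ w * star w = 1) ∧
        Real.sqrt (τ (star (z - w) * (z - w))).re ≤ 4 * Real.sqrt ε :=
  close_to_unitary_of_close_to_almost_unitary_general τ hτ1 hτpos ε hε1 y v a hy2norm hv ha0 ha1 hy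
end

section
/- Let A and B be unital (associative) rings and let f, g : A → B be additive maps such that f(x y) = f(x) f(y) for all x, y ∈ A, g(x y) = g(y) g(x) for all x, y ∈ A, and f(1) + g(1) = 1. If the map x ↦ f(x) + g(x) is surjective onto B, then e := f(1) is a central idempotent of B; moreover e · f(x) = f(x) · e = f(x) and e · g(x) = g(x) · e = 0 for all x ∈ A. -/
/-- If `f` is multiplicative, `g` is anti-multiplicative, `f 1 + g 1 = 1`, and
`x ↦ f x + g x` is surjective, then `e := f 1` is a central idempotent absorbing
`f` and annihilating `g`. -/
theorem central_idempotent_of_jordan_decomposition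
    {A B : Type*} [Ring A] [Ring B]
    (f g : A →+ B)
    (hf : ∀ x y : A, f (x * y) = f x * f y)
    (hg : ∀ x y : A, g (x * y) = g y * g x)
    (h1 : f 1 + g 1 = 1)
    (hsurj : Function.Surjective (fun x : A => f x + g x)) :
    (f 1 * f 1 = f 1) ∧ (∀ b : B, f 1 * b = b * f 1) ∧
    (∀ x : A, f 1 * f x = f x ∧ f x * f 1 = f x) ∧
    (∀ x : A, f 1 * g x = 0 ∧ g x * f 1 = 0) := by
  have hidem : f 1 * f 1 = f 1 := by rw [← hf 1 1, one_mul]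
  have habsl : ∀ x : A, f 1 * f x = f x := fun x => by rw [← hf 1 x, one_mul]
  have habsr : ∀ x : A, f x * f 1 = f x := fun x => by rw [← hf x 1, mul_one]
  have hg1 : g 1 = 1 - f 1 := by rw [eq_sub_iff_add_eq, add_comm]; exact h1
  have hgl : ∀ x : A, f 1 * g x = 0 := fun x => by
    have h : g 1 * g x = g x := by rw [← hg x 1, mul_one]
    rw [hg1, sub_mul, one_mul, sub_eq_self] at h
    exact h
  have hgr : ∀ x : A, g x * f 1 = 0 := fun x => by
    have h : g x * g 1 = g x := by rw [← hg 1 x, one_mul]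
    rw [hg1, mul_sub, mul_one, sub_eq_self] at h
    exact h
  refine ⟨hidem, ?_, fun x => ⟨habsl x, habsr x⟩, fun x => ⟨hgl x, hgr x⟩⟩
  intro b
  obtain ⟨x, rfl⟩ := hsurj b
  simp only [mul_add, add_mul, habsl x, habsr x, hgl x, hgr x]
end

section
/- Let A and B be unital (associative) rings and let f, g : A → B be additive maps such that f(x y) = f(x) f(y) for all x, y ∈ A, g(x y) = g(y) g(x) for all x, y ∈ A, and f(1) + g(1) = 1. Suppose the map T := (x ↦ f(x) + g(x)) is surjective onto B, and suppose the only central idempotents of B are 0 and 1. Then either g = 0 (so that T = f is a unital multiplicative map, i.e. a ring homomorphism) or f = 0 (so that T = g is a unital anti-multiplicative map, i.e. a ring homomorphism into the opposite ring Bᵐᵒᵖ). -/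
/-- If `f` is multiplicative, `g` is anti-multiplicative, `f 1 + g 1 = 1`,
`x ↦ f x + g x` is surjective, and the only central idempotents of `B` are `0`
and `1`, then `g = 0` or `f = 0`. -/
theorem hom_or_antihom_of_jordan_decomposition
    {A B : Type*} [Ring A] [Ring B]
    (f g : A →+ B)
    (hf : ∀ x y : A, f (x * y) = f x * f y)
    (hg : ∀ x y : A, g (x * y) = g y * g x)
    (h1 : f 1 + g 1 = 1)
    (hsurj : Function.Surjective (fun x : A => f x + g x))
    (hfactor : ∀ e : B, e * e = e → (∀ b : B, e * b = b * e) → e = 0 ∨ e = 1) :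
    (∀ x : A, g x = 0) ∨ (∀ x : A, f x = 0) := by
  set e := f 1 with he
  have hidem : e * e = e := by rw [he, ← hf, one_mul]
  have hg1 : g 1 = 1 - e := by rw [he]; exact eq_sub_of_add_eq' h1
  -- f x = f x * e = e * f x
  have hfe : ∀ x : A, f x * e = f x := fun x => by rw [he, ← hf, mul_one]
  have hef : ∀ x : A, e * f x = f x := fun x => by rw [he, ← hf, one_mul]
  -- g x = (1-e) * g x = g x * (1-e)
  have hge : ∀ x : A, g x * e = 0 := fun x => by
    have : g (1 * x) = g x * g 1 := hg 1 x
    rw [one_mul, hg1, mul_sub, mul_one] at this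
    exact sub_eq_self.mp this.symm
  have heg : ∀ x : A, e * g x = 0 := fun x => by
    have : g (x * 1) = g 1 * g x := hg x 1
    rw [mul_one, hg1, sub_mul, one_mul] at this
    exact sub_eq_self.mp this.symm
  have hcentral : ∀ b : B, e * b = b * e := by
    intro b
    obtain ⟨x, hx⟩ := hsurj b
    simp only at hx
    rw [← hx, mul_add, add_mul, hef, hfe, hge, heg]
  rcases hfactor e hidem hcentral with h0 | h1'
  · right
    intro x
    have := hef x
    rw [h0, zero_mul] at this
    exact this.symm
  · left
    intro x
    have : g x * e = 0 := hge x
    rw [h1', mul_one] at this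
    exact this
end

section
/- Let A be a unital complex C*-algebra with a tracial state τ and associated 2-norm ‖x‖₂ := (Re τ(x* x))^{1/2}. Let u₁, …, uₙ ∈ A be unitaries and let c₁, …, cₙ be real numbers with c₁ + ⋯ + cₙ = 0. Then ∑_{i=1}^{n} ∑_{j=1}^{n} cᵢ cⱼ ‖uᵢ - uⱼ‖₂² ≤ 0; in fact this double sum equals -2‖∑ᵢ cᵢ uᵢ‖₂². -/
open scoped ComplexOrder

/-- The 2-norm metric on unitaries is of negative type: for unitaries `u i` and
real scalars `c i` summing to `0`,
`∑ i, ∑ j, c i * c j * ‖u i - u j‖₂² = -2 ‖∑ i, c i • u i‖₂² ≤ 0`. -/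
theorem unitary_two_norm_metric_negative_type
    {A : Type*} [CStarAlgebra A]
    (τ : A →ₗ[ℂ] ℂ)
    (hτ1 : τ 1 = 1)
    (hτpos : ∀ x : A, 0 ≤ τ (star x * x))
    (hτtr : ∀ x y : A, τ (x * y) = τ (y * x))
    (n : ℕ) (u : Fin n → A)
    (hu : ∀ i, star (u i) * u i = 1 ∧ u i * star (u i) = 1)
    (c : Fin n → ℝ) (hc : ∑ i, c i = 0) :
    (∑ i, ∑ j, c i * c j *
        (Real.sqrt (τ (star (u i - u j) * (u i - u j))).re) ^ 2) =
      -2 * (Real.sqrt (τ (star (∑ i, (c i : ℂ) • u i) *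
        (∑ i, (c i : ℂ) • u i))).re) ^ 2 ∧
    (∑ i, ∑ j, c i * c j *
        (Real.sqrt (τ (star (u i - u j) * (u i - u j))).re) ^ 2) ≤ 0 := by
  have key : ∀ x : A, 0 ≤ (τ (star x * x)).re := fun x =>
    (Complex.nonneg_iff.mp (hτpos x)).1
  have hsq : ∀ y : A, (Real.sqrt (τ (star y * y)).re) ^ 2 = (τ (star y * y)).re :=
    fun y => Real.sq_sqrt (key y)
  set x := ∑ i, (c i : ℂ) • u i with hx
  have hS : 0 ≤ (τ (star x * x)).re := key x
  have hpair : ∀ i j, (τ (star (u i - u j) * (u i - u j))).re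
      = 2 - (τ (star (u i) * u j)).re - (τ (star (u j) * u i)).re := by
    intro i j
    have h : star (u i - u j) * (u i - u j)
        = 1 + 1 - star (u i) * u j - star (u j) * u i := by
      rw [star_sub, sub_mul, mul_sub, mul_sub, (hu i).1, (hu j).1]
      abel
    rw [h]
    simp [map_sub, map_add, hτ1]
    norm_num
  have hRHS : (τ (star x * x)).re = ∑ i, ∑ j, c i * c j * (τ (star (u i) * u j)).re := by
    rw [hx, star_sum, Finset.sum_mul_sum]
    simp only [star_smul, Complex.star_def, Complex.conj_ofReal, smul_mul_smul_comm,
      map_sum, map_smul, smul_eq_mul]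
    rw [Complex.re_sum]
    refine Finset.sum_congr rfl fun i _ => ?_
    rw [Complex.re_sum]
    refine Finset.sum_congr rfl fun j _ => ?_
    push_cast
    simp [Complex.mul_re]
  have hmain : (∑ i, ∑ j, c i * c j *
        (Real.sqrt (τ (star (u i - u j) * (u i - u j))).re) ^ 2)
      = -2 * (τ (star x * x)).re := by
    have : ∀ i j, c i * c j * (Real.sqrt (τ (star (u i - u j) * (u i - u j))).re) ^ 2
        = c i * c j * 2 - c i * c j * (τ (star (u i) * u j)).re
          - c i * c j * (τ (star (u j) * u i)).re := by
      intro i j; rw [hsq, hpair]; ring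
    simp only [this, Finset.sum_sub_distrib]
    rw [hRHS]
    have h1 : (∑ i, ∑ j, c i * c j * 2) = (∑ i, c i) * (∑ j, c j) * 2 := by
      rw [Finset.sum_mul_sum]; simp [Finset.sum_mul, mul_assoc]
    have h2 : (∑ i : Fin n, ∑ j, c i * c j * (τ (star (u j) * u i)).re)
        = ∑ i, ∑ j, c i * c j * (τ (star (u i) * u j)).re := by
      rw [Finset.sum_comm]
      exact Finset.sum_congr rfl fun i _ => Finset.sum_congr rfl fun j _ => by ring
    rw [h1, h2, hc]
    ring
  refine ⟨by rw [hmain, hsq], ?_⟩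
  rw [hmain]
  nlinarith
end
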